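/- arXiv:cond-mat/0602311 — 6 statements merged into one kernel-verified Lean document; each statement's English description precedes it below -/
import Mathlib

section
/- Under the Crooks relation and the involution assumption (P_ρτ(ω|Θγ) = P_ρ₀(sω|γ) with s an involution commuting with Θ), for a finite path space the distribution of the dissipated work W^dis = W_γ - ΔF under P_ρ₀(·|γ) satisfies the exact fluctuation symmetry: P(W^dis = w) = exp(βw) · P(W^dis = -w) for every w ∈ ℝ. -/
open Finset in
/-- On a finite path space, Crooks + involution assumption imply the
exact fluctuation symmetry for the dissipated work `W^dis = W_γ - ΔF`:
`P(W^dis = w) = exp(β w) · P(W^dis = -w)` for every `w`. -/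
theorem work_exact_fluctuation_symmetry {Ω : Type*} [Fintype Ω]
    (Θ s : Ω → Ω) (hsinv : ∀ ω, s (s ω) = ω) (hΘinv : ∀ ω, Θ (Θ ω) = ω)
    (hcomm : ∀ ω, s (Θ ω) = Θ (s ω))
    (W P0 PT : Ω → ℝ) (hP0 : ∀ ω, 0 < P0 ω) (hPT : ∀ ω, 0 < PT ω)
    (hP0sum : ∑ ω, P0 ω = 1)
    (β ΔF : ℝ) (hβ : 0 < β)
    (crooks : ∀ ω, P0 ω = PT (Θ ω) * Real.exp (β * (W ω - ΔF)))
    (inv : ∀ ω, PT ω = P0 (s ω)) :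
    ∀ w : ℝ, (∑ ω, if W ω - ΔF = w then P0 ω else 0)
      = Real.exp (β * w) * ∑ ω, if W ω - ΔF = -w then P0 ω else 0 := by
  -- the map g : ω ↦ s (Θ ω)
  set g : Ω → Ω := fun ω => s (Θ ω) with hg
  have hginv : ∀ ω, g (g ω) = ω := by
    intro ω
    show s (Θ (s (Θ ω))) = ω
    rw [hcomm, hsinv, hΘinv]
  -- key relation: P0 ω = P0 (g ω) * exp (β (W ω - ΔF))
  have hkey : ∀ ω, P0 ω = P0 (g ω) * Real.exp (β * (W ω - ΔF)) := by
    intro ω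
    rw [crooks ω, inv]
  -- antisymmetry of dissipated work under g
  have hanti : ∀ ω, W (g ω) - ΔF = -(W ω - ΔF) := by
    intro ω
    have h1 := hkey ω
    have h2 := hkey (g ω)
    rw [hginv ω] at h2
    rw [h2] at h1
    have hE : Real.exp (β * (W (g ω) - ΔF)) * Real.exp (β * (W ω - ΔF)) = 1 := by
      nlinarith [Real.exp_pos (β * (W (g ω) - ΔF)), Real.exp_pos (β * (W ω - ΔF)), hP0 ω]
    rw [← Real.exp_add, ← Real.exp_zero] at hE
    have h0 := Real.exp_injective hE
    have : W (g ω) - ΔF + (W ω - ΔF) = 0 := by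
      rcases mul_eq_zero.mp (by linarith : β * (W (g ω) - ΔF + (W ω - ΔF)) = 0) with h | h
      · exact absurd h hβ.ne'
      · exact h
    linarith
  intro w
  have hbij : Function.Bijective g :=
    Function.Involutive.bijective hginv
  rw [← Fintype.sum_bijective g hbij (fun ω => if W (g ω) - ΔF = w then P0 (g ω) else 0)
       (fun ω => if W ω - ΔF = w then P0 ω else 0) (fun ω => rfl)]
  rw [Finset.mul_sum]
  congr 1
  funext ω
  rw [hanti ω]
  by_cases h : W ω - ΔF = -w
  · have hw : -(W ω - ΔF) = w := by rw [h]; ring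
    rw [if_pos hw, if_pos h, hkey ω, h]
    rw [mul_comm (Real.exp (β * w)), mul_assoc, ← Real.exp_add]
    have hz : β * -w + β * w = 0 := by ring
    rw [hz, Real.exp_zero, mul_one]
  · have hw : ¬(-(W ω - ΔF) = w) := fun hc => h (by linarith)
    rw [if_neg hw, if_neg h, mul_zero]
end

section
/- Let I : ℝ → ℝ be a strictly convex differentiable function with minimum at w̄ > 0, I(w̄) = 0, satisfying I(-w) - I(w) = βw for all w, with β > 0. If moreover I is symmetric about w̄ (I(w̄ + x) = I(w̄ - x) for all x), then the unique solution w⋆ of I'(w) = β is w⋆ = 3w̄. -/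
/-- For a strictly convex differentiable rate function with minimum 0
at `wbar > 0`, satisfying the fluctuation symmetry and symmetric about `wbar`,
the unique solution of `I'(w) = β` is `w = 3 wbar`. -/
theorem wstar_eq_three_wbar (I : ℝ → ℝ) (β wbar : ℝ) (hβ : 0 < β) (hw : 0 < wbar)
    (hdiff : Differentiable ℝ I) (hconv : StrictConvexOn ℝ Set.univ I)
    (hmin : ∀ w, I wbar ≤ I w) (h0 : I wbar = 0)
    (hFS : ∀ w, I (-w) - I w = β * w)
    (hsym : ∀ x, I (wbar + x) = I (wbar - x)) :
    deriv I (3 * wbar) = β ∧ ∀ w, deriv I w = β → w = 3 * wbar := by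
  -- derivative at wbar is 0
  have hderivbar : deriv I wbar = 0 := by
    have : IsLocalMin I wbar := (isMinOn_univ_iff.2 hmin).isLocalMin Filter.univ_mem
    exact this.deriv_eq_zero
  -- FS derivative: -(deriv I (-w)) = deriv I w + β
  have hFS' : ∀ w : ℝ, -(deriv I (-w)) = deriv I w + β := by
    intro w
    have h1 : HasDerivAt (fun w : ℝ => I (-w)) (-(deriv I (-w))) w := by
      have h := ((hdiff (-w)).hasDerivAt).comp w (hasDerivAt_neg w)
      simp at h
      exact h
    have heq : (fun w : ℝ => I (-w)) = fun w => I w + β * w := by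
      funext x; have := hFS x; linarith
    have h2 : HasDerivAt (fun w : ℝ => I w + β * w) (deriv I w + β) w := by
      have h := ((hdiff w).hasDerivAt).add ((hasDerivAt_id w).const_mul β)
      simp at h
      exact h
    rw [heq] at h1
    exact h1.unique h2
  -- symmetry derivative: deriv I (wbar + x) = -(deriv I (wbar - x))
  have hsym' : ∀ x : ℝ, deriv I (wbar + x) = -(deriv I (wbar - x)) := by
    intro x
    have h1 : HasDerivAt (fun x : ℝ => I (wbar + x)) (deriv I (wbar + x)) x := by
      have h := ((hdiff (wbar + x)).hasDerivAt).comp x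
        ((hasDerivAt_id x).const_add wbar)
      simp at h
      exact h
    have h2 : HasDerivAt (fun x : ℝ => I (wbar - x)) (-(deriv I (wbar - x))) x := by
      have h := ((hdiff (wbar - x)).hasDerivAt).comp x
        ((hasDerivAt_id x).const_sub wbar)
      simp at h
      exact h
    have heq : (fun x : ℝ => I (wbar + x)) = fun x => I (wbar - x) := funext hsym
    rw [heq] at h1
    exact h1.unique h2
  have key : deriv I (3 * wbar) = β := by
    have h1 := hsym' (2 * wbar)
    have h2 := hFS' wbar
    have e1 : wbar + 2 * wbar = 3 * wbar := by ring
    have e2 : wbar - 2 * wbar = -wbar := by ring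
    rw [e1, e2] at h1
    rw [hderivbar] at h2
    linarith
  refine ⟨key, fun w hw' => ?_⟩
  have hmono : StrictMonoOn (deriv I) Set.univ :=
    hconv.strictMonoOn_deriv fun x _ => hdiff x
  have := hmono.injOn (Set.mem_univ w) (Set.mem_univ (3 * wbar)) (by rw [hw', key])
  exact this
end

section
/- Define h(q) = -inf over w ∈ ℝ of [I(w) + β|q - w|] where I(w) = β(w - w̄)²/(4w̄), w̄ > 0, β > 0, and set w⋆ = 3w̄. Then h(q) = -I(-w̄) + β(w̄ + q) for q ≤ -w̄; h(q) = -I(q) for -w̄ ≤ q ≤ w⋆; and h(q) = -I(w⋆) - β(q - w⋆) for q ≥ w⋆. -/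
lemma ciInf_eq_of_min (f : ℝ → ℝ) (m w₀ : ℝ) (h1 : f w₀ = m) (h2 : ∀ w, m ≤ f w) :
    (⨅ w : ℝ, f w) = m :=
  le_antisymm (h1 ▸ ciInf_le ⟨m, by rintro x ⟨w, rfl⟩; exact h2 w⟩ w₀) (le_ciInf h2)

/-- Explicit form of
`h(q) = -inf_w [I(w) + β|q - w|]` with `I(w) = β(w - wbar)²/(4 wbar)`. -/
theorem heat_rate_function_infconv (β wbar : ℝ) (hβ : 0 < β) (hw : 0 < wbar)
    (I h : ℝ → ℝ)
    (hI : ∀ w, I w = β * (w - wbar) ^ 2 / (4 * wbar))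
    (hh : ∀ q, h q = -⨅ w : ℝ, (I w + β * |q - w|)) :
    (∀ q, q ≤ -wbar → h q = -I (-wbar) + β * (wbar + q)) ∧
    (∀ q, -wbar ≤ q → q ≤ 3 * wbar → h q = -I q) ∧
    (∀ q, 3 * wbar ≤ q → h q = -I (3 * wbar) - β * (q - 3 * wbar)) := by
  refine ⟨?_, ?_, ?_⟩
  · intro q hq
    rw [hh, ciInf_eq_of_min _ (I (-wbar) - β * (wbar + q)) (-wbar)]
    · ring
    · have : |q - (-wbar)| = -(q + wbar) := by
        rw [abs_of_nonpos (by linarith)]; ring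
      rw [this]; ring
    · intro w
      have h1 : β * (w - q) ≤ β * |q - w| := by
        have := neg_abs_le (q - w)
        nlinarith
      simp only [hI]
      rw [div_sub' (by positivity : (4:ℝ)*wbar ≠ 0),
        div_add' _ _ _ (by positivity : (4:ℝ)*wbar ≠ 0),
        div_le_div_iff₀ (by positivity) (by positivity)]
      nlinarith [mul_le_mul_of_nonneg_right h1 (by positivity : (0:ℝ) ≤ 16 * wbar ^ 2),
        mul_nonneg (mul_nonneg hβ.le (sq_nonneg (w + wbar))) hw.le]
  · intro q hq hq'
    rw [hh, ciInf_eq_of_min _ (I q) q]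
    · rw [sub_self, abs_zero, mul_zero, add_zero]
    · intro w
      have h1 : β * (w - q) ≤ β * |q - w| := by
        have := neg_abs_le (q - w); nlinarith
      have h2 : β * (q - w) ≤ β * |q - w| := by
        have := le_abs_self (q - w); nlinarith
      simp only [hI]
      rw [div_add' _ _ _ (by positivity : (4:ℝ)*wbar ≠ 0),
        div_le_div_iff₀ (by positivity) (by positivity)]
      rcases le_total w q with hc | hc
      · nlinarith [mul_le_mul_of_nonneg_right h2 (by positivity : (0:ℝ) ≤ 16 * wbar ^ 2),
          mul_nonneg (mul_nonneg hβ.le (mul_nonneg (sub_nonneg.2 hc)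
            (by linarith : (0:ℝ) ≤ 6 * wbar - w - q))) hw.le]
      · nlinarith [mul_le_mul_of_nonneg_right h1 (by positivity : (0:ℝ) ≤ 16 * wbar ^ 2),
          mul_nonneg (mul_nonneg hβ.le (mul_nonneg (sub_nonneg.2 hc)
            (by linarith : (0:ℝ) ≤ w + q + 2 * wbar))) hw.le]
  · intro q hq
    rw [hh, ciInf_eq_of_min _ (I (3 * wbar) + β * (q - 3 * wbar)) (3 * wbar)]
    · ring
    · have : |q - 3 * wbar| = q - 3 * wbar := abs_of_nonneg (by linarith)
      rw [this]
    · intro w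
      have h2 : β * (q - w) ≤ β * |q - w| := by
        have := le_abs_self (q - w); nlinarith
      simp only [hI]
      rw [div_add' _ _ _ (by positivity : (4:ℝ)*wbar ≠ 0),
        div_add' _ _ _ (by positivity : (4:ℝ)*wbar ≠ 0),
        div_le_div_iff₀ (by positivity) (by positivity)]
      nlinarith [mul_le_mul_of_nonneg_right h2 (by positivity : (0:ℝ) ≤ 16 * wbar ^ 2),
        mul_nonneg (mul_nonneg hβ.le (sq_nonneg (w - 3 * wbar))) hw.le]
end

section
/- With h as in the infimal convolution above (h(q) = -inf_w [β(w - w̄)²/(4w̄) + β|q - w|]), the antisymmetrized function f(q) = h(q) - h(-q) satisfies: f(q) = βq for 0 ≤ q ≤ w̄; f(q) = βq - β(q - w̄)²/(4w̄) for w̄ ≤ q ≤ 3w̄; and f(q) = 2βw̄ for q ≥ 3w̄. -/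
private lemma inf_eq_of (β wbar : ℝ) (q c w0 : ℝ)
    (hlb : ∀ w : ℝ, c ≤ β * (w - wbar) ^ 2 / (4 * wbar) + β * |q - w|)
    (heq : β * (w0 - wbar) ^ 2 / (4 * wbar) + β * |q - w0| = c) :
    (⨅ w : ℝ, (β * (w - wbar) ^ 2 / (4 * wbar) + β * |q - w|)) = c := by
  apply le_antisymm
  · calc (⨅ w : ℝ, (β * (w - wbar) ^ 2 / (4 * wbar) + β * |q - w|))
        ≤ β * (w0 - wbar) ^ 2 / (4 * wbar) + β * |q - w0| :=
          ciInf_le ⟨c, by rintro x ⟨w, rfl⟩; exact hlb w⟩ w0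
    _ = c := heq
  · exact le_ciInf hlb

/-- The antisymmetrized heat rate function `f(q) = h(q) - h(-q)` with
`h(q) = -inf_w [β(w - wbar)²/(4 wbar) + β|q - w|]` has the three regimes of the text. -/
theorem heat_fluctuation_symmetry_regimes (β wbar : ℝ) (hβ : 0 < β) (hw : 0 < wbar)
    (h f : ℝ → ℝ)
    (hh : ∀ q, h q = -⨅ w : ℝ, (β * (w - wbar) ^ 2 / (4 * wbar) + β * |q - w|))
    (hf : ∀ q, f q = h q - h (-q)) :
    (∀ q, 0 ≤ q → q ≤ wbar → f q = β * q) ∧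
    (∀ q, wbar ≤ q → q ≤ 3 * wbar → f q = β * q - β * (q - wbar) ^ 2 / (4 * wbar)) ∧
    (∀ q, 3 * wbar ≤ q → f q = 2 * β * wbar) := by
  have h4 : (0:ℝ) < 4 * wbar := by linarith
  -- middle regime of h
  have hmid : ∀ q, -wbar ≤ q → q ≤ 3 * wbar →
      h q = -(β * (q - wbar) ^ 2 / (4 * wbar)) := by
    intro q h1 h2
    rw [hh q, neg_inj]
    apply inf_eq_of β wbar q _ q
    · intro w
      rcases abs_cases (q - w) with ⟨he, hs⟩ | ⟨he, hs⟩ <;>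
        rw [he, div_add' _ _ _ h4.ne'] <;>
        refine (div_le_div_iff_of_pos_right h4).mpr ?_
      · nlinarith [mul_nonneg (mul_nonneg hβ.le hs) (show (0:ℝ) ≤ 6 * wbar - q - w by linarith)]
      · nlinarith [mul_nonneg (mul_nonneg hβ.le (by linarith : (0:ℝ) ≤ w - q))
          (by linarith : (0:ℝ) ≤ q + w + 2 * wbar)]
    · simp
  -- high regime of h
  have hhi : ∀ q, 3 * wbar ≤ q → h q = -(β * q - 2 * β * wbar) := by
    intro q h1
    rw [hh q, neg_inj]
    apply inf_eq_of β wbar q _ (3 * wbar)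
    · intro w
      rcases abs_cases (q - w) with ⟨he, hs⟩ | ⟨he, hs⟩ <;>
        rw [he, div_add' _ _ _ h4.ne', le_div_iff₀ h4]
      · nlinarith [mul_nonneg hβ.le (sq_nonneg (w - 3 * wbar))]
      · nlinarith [mul_nonneg hβ.le (sq_nonneg (w - 3 * wbar)),
          mul_nonneg (mul_nonneg hβ.le hw.le) (by linarith : (0:ℝ) ≤ w - q)]
    · rw [abs_of_nonneg (by linarith)]
      field_simp
      ring
  -- low regime of h
  have hlo : ∀ q, q ≤ -wbar → h q = β * q := by
    intro q h1
    rw [hh q, neg_eq_iff_eq_neg]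
    apply inf_eq_of β wbar q _ (-wbar)
    · intro w
      rcases abs_cases (q - w) with ⟨he, hs⟩ | ⟨he, hs⟩ <;>
        rw [he, div_add' _ _ _ h4.ne', le_div_iff₀ h4]
      · nlinarith [mul_nonneg hβ.le (sq_nonneg (w + wbar)),
          mul_nonneg (mul_nonneg hβ.le hw.le) hs]
      · nlinarith [mul_nonneg hβ.le (sq_nonneg (w + wbar))]
    · rw [abs_of_nonpos (by linarith)]
      field_simp
      ring
  refine ⟨?_, ?_, ?_⟩
  · intro q hq1 hq2
    rw [hf q, hmid q (by linarith) (by linarith), hmid (-q) (by linarith) (by linarith)]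
    field_simp
    ring
  · intro q hq1 hq2
    rw [hf q, hmid q (by linarith) (by linarith), hlo (-q) (by linarith)]
    ring
  · intro q hq1
    rw [hf q, hhi q hq1, hlo (-q) (by linarith)]
    ring
end

section
/- In the toy model with v = 2w̄, w̄ > 0, and w̄ < v t⋆, the antisymmetrized Legendre transform f(q) = h(q) - h(-q) (h as in the previous statement) satisfies f(q) = q for 0 ≤ q ≤ v t⋆ - w̄ (taking the normalization where the linear slope near zero is 1 when v = 2w̄ and β = 1), f(q) = -(q - w̄)²/(2v) + q t⋆ - v t⋆²/2 + w̄ t⋆ for v t⋆ - w̄ ≤ q ≤ v t⋆ + w̄, and f(q) = 2 w̄ t⋆ for q ≥ v t⋆ + w̄. -/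
/-- Sup over a set equals the value at a maximizer. -/
lemma ciSup_eq_of_isGreatest {s : Set ℝ} (φ : ℝ → ℝ) (t0 : ℝ) (h0 : t0 ∈ s)
    (hb : ∀ t ∈ s, φ t ≤ φ t0) : (⨆ t : s, φ (t : ℝ)) = φ t0 := by
  haveI : Nonempty s := ⟨⟨t0, h0⟩⟩
  apply le_antisymm
  · exact ciSup_le (fun t => hb t t.2)
  · exact le_ciSup (f := fun t : s => φ (t : ℝ))
      ⟨φ t0, by rintro x ⟨t, rfl⟩; exact hb t t.2⟩ ⟨t0, h0⟩

lemma sup_interior (v tstar q wbar : ℝ) (hv : 0 < v) (hlo : -(v * tstar) ≤ q - wbar)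
    (hhi : q - wbar ≤ v * tstar) :
    (⨆ t : Set.Icc (-tstar) tstar,
      (q * (t : ℝ) - (v * (t : ℝ) ^ 2 / 2 + (t : ℝ) * wbar))) = (q - wbar) ^ 2 / (2 * v) := by
  have hvne : v ≠ 0 := ne_of_gt hv
  have ht0 : (q - wbar) / v ∈ Set.Icc (-tstar) tstar := by
    constructor
    · rw [le_div_iff₀ hv]; nlinarith
    · rw [div_le_iff₀ hv]; nlinarith
  have hval : q * ((q - wbar) / v) - (v * ((q - wbar) / v) ^ 2 / 2 + ((q - wbar) / v) * wbar)
      = (q - wbar) ^ 2 / (2 * v) := by field_simp; ring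
  have := ciSup_eq_of_isGreatest (s := Set.Icc (-tstar) tstar)
    (fun t => q * t - (v * t ^ 2 / 2 + t * wbar)) ((q - wbar) / v) ht0
    (by intro t _ht; rw [hval, le_div_iff₀ (by linarith : (0:ℝ) < 2 * v)]
        nlinarith [sq_nonneg (q - wbar - v * t)])
  rw [this]; rw [hval]
lemma sup_right (v tstar q wbar : ℝ) (hv : 0 < v) (ht : 0 < tstar)
    (hge : v * tstar ≤ q - wbar) :
    (⨆ t : Set.Icc (-tstar) tstar,
      (q * (t : ℝ) - (v * (t : ℝ) ^ 2 / 2 + (t : ℝ) * wbar)))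
      = (q - wbar) * tstar - v * tstar ^ 2 / 2 := by
  have ht0 : tstar ∈ Set.Icc (-tstar) tstar := ⟨by linarith, le_refl _⟩
  have := ciSup_eq_of_isGreatest (s := Set.Icc (-tstar) tstar)
    (fun t => q * t - (v * t ^ 2 / 2 + t * wbar)) tstar ht0
    (by intro t hts
        obtain ⟨h1, h2⟩ := hts
        nlinarith [mul_nonneg (sub_nonneg.2 h2) (sub_nonneg.2 (by nlinarith : v * (tstar + t) / 2 ≤ q - wbar))])
  rw [this]; ring

lemma sup_left (v tstar q wbar : ℝ) (hv : 0 < v) (ht : 0 < tstar)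
    (hle : q - wbar ≤ -(v * tstar)) :
    (⨆ t : Set.Icc (-tstar) tstar,
      (q * (t : ℝ) - (v * (t : ℝ) ^ 2 / 2 + (t : ℝ) * wbar)))
      = -(q - wbar) * tstar - v * tstar ^ 2 / 2 := by
  have ht0 : -tstar ∈ Set.Icc (-tstar) tstar := ⟨le_refl _, by linarith⟩
  have := ciSup_eq_of_isGreatest (s := Set.Icc (-tstar) tstar)
    (fun t => q * t - (v * t ^ 2 / 2 + t * wbar)) (-tstar) ht0
    (by intro t hts
        obtain ⟨h1, h2⟩ := hts
        nlinarith [mul_nonneg (sub_nonneg.2 h1) (sub_nonneg.2 (by nlinarith : q - wbar ≤ v * (-tstar + t) / 2 ))])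
  rw [this]; ring

/-- Toy model with `v = 2 wbar` and `wbar < v t⋆`: the antisymmetrized
Legendre transform `f(q) = h(q) - h(-q)` has the three regimes of eq. (App II, small case). -/
theorem toy_model_heat_regimes (wbar v tstar : ℝ)
    (hw : 0 < wbar) (hv : v = 2 * wbar) (ht : 0 < tstar) (hlt : wbar < v * tstar)
    (h f : ℝ → ℝ)
    (hh : ∀ q, h q = -⨆ t : Set.Icc (-tstar) tstar,
      (q * (t : ℝ) - (v * (t : ℝ) ^ 2 / 2 + (t : ℝ) * wbar)))
    (hf : ∀ q, f q = h q - h (-q)) :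
    (∀ q, 0 ≤ q → q ≤ v * tstar - wbar → f q = q) ∧
    (∀ q, v * tstar - wbar ≤ q → q ≤ v * tstar + wbar →
      f q = -(q - wbar) ^ 2 / (2 * v) + q * tstar - v * tstar ^ 2 / 2 + wbar * tstar) ∧
    (∀ q, v * tstar + wbar ≤ q → f q = 2 * wbar * tstar) := by
  have hv0 : 0 < v := by linarith
  have hwne : wbar ≠ 0 := ne_of_gt hw
  subst hv
  refine ⟨?_, ?_, ?_⟩
  · intro q hq0 hq1
    rw [hf q, hh q, hh (-q),
      sup_interior _ tstar q wbar hv0 (by linarith) (by linarith),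
      sup_interior _ tstar (-q) wbar hv0 (by linarith) (by linarith)]
    field_simp; ring
  · intro q hq0 hq1
    rw [hf q, hh q, hh (-q),
      sup_interior _ tstar q wbar hv0 (by linarith) (by linarith),
      sup_left _ tstar (-q) wbar hv0 ht (by linarith)]
    field_simp; ring
  · intro q hq0
    rw [hf q, hh q, hh (-q),
      sup_right _ tstar q wbar hv0 ht (by linarith),
      sup_left _ tstar (-q) wbar hv0 ht (by linarith)]
    ring
end

section
/- Under the dynamic reversibility setup of the previous statement with μ invariant under each f_t and under π, for any sets M_0, …, M_τ ⊆ Γ one has μ(⋂_{t=0}^{τ} φ_{t,Θγ}⁻¹(π M_{τ-t})) = μ(⋂_{t=0}^{τ} φ_{t,γ}⁻¹(M_t)); equivalently, the probability of the time-reversed reduced trajectory (πM_τ, …, πM_0) under the reversed protocol equals that of (M_0, …, M_τ) under the forward protocol. -/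
open MeasureTheory

/-- Forward protocol flow `φ_{t,γ} = f_t ∘ ⋯ ∘ f_1` (measurable version). -/
def phiFwdM {Γ : Type*} [MeasurableSpace Γ] (f : ℕ → Γ ≃ᵐ Γ) : ℕ → Γ ≃ᵐ Γ
  | 0 => MeasurableEquiv.refl Γ
  | t + 1 => (phiFwdM f t).trans (f (t + 1))

/-- Reversed protocol flow `φ_{t,Θγ} = f_{τ-t+1} ∘ ⋯ ∘ f_τ` (measurable version). -/
def phiRevM {Γ : Type*} [MeasurableSpace Γ] (f : ℕ → Γ ≃ᵐ Γ) (τ : ℕ) : ℕ → Γ ≃ᵐ Γ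
  | 0 => MeasurableEquiv.refl Γ
  | t + 1 => (phiRevM f τ t).trans (f (τ - t))

/-- Under dynamic reversibility with `μ` invariant under each `f_t` and
under `π`, the measure of the time-reversed reduced trajectory equals that of the
forward one:
`μ(⋂_{t=0}^{τ} φ_{t,Θγ}⁻¹(π M_{τ-t})) = μ(⋂_{t=0}^{τ} φ_{t,γ}⁻¹(M_t))`. -/
theorem reversed_trajectory_measure {Γ : Type*} [MeasurableSpace Γ]
    (μ : Measure Γ) (f : ℕ → Γ ≃ᵐ Γ) (τ : ℕ)
    (hf : ∀ t, MeasurePreserving (f t) μ μ)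
    (π : Γ ≃ᵐ Γ) (hπmp : MeasurePreserving π μ μ) (hπ : ∀ x, π (π x) = x)
    (hrev : ∀ t x, f t (π x) = π ((f t).symm x))
    (M : ℕ → Set Γ) (hM : ∀ t, MeasurableSet (M t)) :
    μ (⋂ t ∈ Finset.range (τ + 1), (phiRevM f τ t) ⁻¹' (π '' M (τ - t)))
      = μ (⋂ t ∈ Finset.range (τ + 1), (phiFwdM f t) ⁻¹' (M t)) := by
  have mpFwd : ∀ t, MeasurePreserving (phiFwdM f t) μ μ := by
    intro t
    induction t with
    | zero => exact MeasurePreserving.id μ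
    | succ t ih => exact (hf (t + 1)).comp ih
  set g : Γ ≃ᵐ Γ := (phiFwdM f τ).trans π with hg
  have hgmp : MeasurePreserving g μ μ := hπmp.comp (mpFwd τ)
  have key : ∀ t, t ≤ τ → ∀ x, phiRevM f τ t (g x) = π (phiFwdM f (τ - t) x) := by
    intro t
    induction t with
    | zero => intro _ x; rfl
    | succ t ih =>
      intro ht x
      have ht' : t ≤ τ := Nat.le_of_succ_le ht
      have hsub : τ - t = (τ - (t + 1)) + 1 := by omega
      have h1 : phiRevM f τ (t + 1) (g x) = f (τ - t) (phiRevM f τ t (g x)) := rfl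
      rw [h1, ih ht' x, hrev]
      congr 1
      rw [hsub]
      show (f (τ - (t + 1) + 1)).symm (f (τ - (t + 1) + 1) (phiFwdM f (τ - (t + 1)) x))
        = phiFwdM f (τ - (t + 1)) x
      exact (f (τ - (t + 1) + 1)).symm_apply_apply _
  have hpre : g ⁻¹' (⋂ t ∈ Finset.range (τ + 1), phiRevM f τ t ⁻¹' (π '' M (τ - t)))
      = ⋂ t ∈ Finset.range (τ + 1), phiFwdM f (τ - t) ⁻¹' (M (τ - t)) := by
    ext x
    simp only [Set.preimage_iInter, Set.mem_iInter, Set.mem_preimage, Finset.mem_range,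
      Nat.lt_succ_iff]
    refine forall_congr' fun t => forall_congr' fun ht => ?_
    rw [key t ht x]
    exact π.injective.mem_set_image
  have hre : (⋂ t ∈ Finset.range (τ + 1), phiFwdM f (τ - t) ⁻¹' (M (τ - t)))
      = ⋂ t ∈ Finset.range (τ + 1), phiFwdM f t ⁻¹' (M t) := by
    ext x
    simp only [Set.mem_iInter, Finset.mem_range, Nat.lt_succ_iff, Set.mem_preimage]
    constructor
    · intro h t ht
      have := h (τ - t) (Nat.sub_le τ t)
      rwa [Nat.sub_sub_self ht] at this
    · intro h t ht
      exact h (τ - t) (Nat.sub_le τ t)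
  have hBmeas : MeasurableSet (⋂ t ∈ Finset.range (τ + 1),
      phiRevM f τ t ⁻¹' (π '' M (τ - t))) := by
    refine MeasurableSet.biInter (Finset.range (τ + 1)).countable_toSet fun t _ => ?_
    refine (phiRevM f τ t).measurable ?_
    rw [show ⇑π '' M (τ - t) = ⇑π.symm ⁻¹' M (τ - t) from Equiv.image_eq_preimage_symm π.toEquiv _]
    exact π.symm.measurable (hM _)
  rw [← hgmp.measure_preimage hBmeas.nullMeasurableSet, hpre, hre]
end
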